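/- A matrix A ∈ Mat₃(L) satisfies A^g = A_g⁻¹·A·A_g if and only if there exist a, b, c ∈ L such that A is the matrix with rows (a, ξ·g(c), ξ·g²(b)), (b, g(a), ξ·g²(c)), (c, g(b), g²(a)); in this case (a,b,c) is the first column of A. -/

import Mathlib

/-!
Since `A_g` is invertible, the condition reads `A_g · A^g = A · A_g`. Comparing entries, six of
the nine equations express the second and third columns of `A` through `g` applied to the first
column (using `g ξ = ξ`); for a matrix of that shape the remaining three equations say
`g³ a = a`, `g³ b = b`, `g³ c = c`, which hold because `Gal(L/k)` has order `3`.
-/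

open Matrix

section CyclicForm

variable {R : Type*} [CommRing R]

def shiftMatrix (ξ : R) : Matrix (Fin 3) (Fin 3) R := !![0, 0, ξ; 1, 0, 0; 0, 1, 0]

lemma det_shiftMatrix (ξ : R) : (shiftMatrix ξ).det = ξ := by
  simp [shiftMatrix, det_fin_three]

def cyclicForm (σ : R → R) (ξ a b c : R) : Matrix (Fin 3) (Fin 3) R :=
  !![a, ξ * σ c, ξ * σ (σ b);
     b, σ a, ξ * σ (σ c);
     c, σ b, σ (σ a)]

variable {F : Type*} [FunLike F R R] [MulHomClass F R R] {σ : F} {ξ : R}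

lemma eq_cyclicForm_of_shiftMatrix_mul_map_eq {A : Matrix (Fin 3) (Fin 3) R} (hξ : σ ξ = ξ)
    (h : shiftMatrix ξ * A.map σ = A * shiftMatrix ξ) :
    A = cyclicForm σ ξ (A 0 0) (A 1 0) (A 2 0) := by
  have e : ∀ i j, (shiftMatrix ξ * A.map σ) i j = (A * shiftMatrix ξ) i j := fun i j => by rw [h]
  have e00 := e 0 0; have e01 := e 0 1; have e10 := e 1 0
  have e11 := e 1 1; have e20 := e 2 0; have e21 := e 2 1
  simp only [shiftMatrix, Fin.isValue, mul_apply, of_apply, cons_val', cons_val_fin_one,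
    cons_val_zero, map_apply, Fin.sum_univ_three, zero_mul, cons_val_one, add_zero, cons_val,
    zero_add, mul_zero, mul_one, one_mul] at e00 e01 e10 e11 e20 e21
  ext i j
  fin_cases i <;> fin_cases j <;>
    simp [cyclicForm, ← e00, ← e01, ← e10, ← e11, ← e20, ← e21, map_mul, hξ]

lemma shiftMatrix_mul_map_cyclicForm (hξ : σ ξ = ξ) (hσ : ∀ x, σ (σ (σ x)) = x) (a b c : R) :
    shiftMatrix ξ * (cyclicForm σ ξ a b c).map σ = cyclicForm σ ξ a b c * shiftMatrix ξ := by
  ext i j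
  fin_cases i <;> fin_cases j <;>
    simp [shiftMatrix, cyclicForm, mul_apply, Fin.sum_univ_three, map_mul, hξ, hσ, mul_comm]

end CyclicForm

lemma AlgEquiv.apply_apply_apply_of_finrank_eq_three {k L : Type*} [Field k] [Field L]
    [Algebra k L] [IsGalois k L] (hdeg : Module.finrank k L = 3) (g : L ≃ₐ[k] L) (x : L) :
    g (g (g x)) = x := by
  have : FiniteDimensional k L := Module.finite_of_finrank_pos (by rw [hdeg]; norm_num)
  have hcard : Fintype.card (L ≃ₐ[k] L) = 3 := by
    rw [← Nat.card_eq_fintype_card, IsGalois.card_aut_eq_finrank, hdeg]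
  have h3 : g ^ 3 = 1 := hcard ▸ pow_card_eq_one
  simpa [pow_succ] using DFunLike.congr_fun h3 x

lemma Matrix.eq_inv_mul_mul_iff {R n : Type*} [CommRing R] [Fintype n] [DecidableEq n]
    {M : Matrix n n R} (hM : IsUnit M.det) (A B : Matrix n n R) :
    B = M⁻¹ * A * M ↔ M * B = A * M := by
  have := M.invertibleOfIsUnitDet hM
  rw [mul_assoc, eq_comm, inv_mul_eq_iff_eq_mul_of_invertible, eq_comm]

theorem stmt_0 (k L : Type*) [Field k] [Field L] [Algebra k L] [IsGalois k L]
    (hdeg : Module.finrank k L = 3)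
    (g : L ≃ₐ[k] L)
    (ξ : k) (hξ : ξ ≠ 0)
    (A : Matrix (Fin 3) (Fin 3) L) :
    (A.map ⇑g =
        (!![0, 0, algebraMap k L ξ; 1, 0, 0; 0, 1, 0])⁻¹ * A *
          !![0, 0, algebraMap k L ξ; 1, 0, 0; 0, 1, 0]) ↔
      ∃ a b c : L,
        A 0 0 = a ∧ A 1 0 = b ∧ A 2 0 = c ∧
          A = !![a, algebraMap k L ξ * g c, algebraMap k L ξ * g (g b);
                 b, g a, algebraMap k L ξ * g (g c);
                 c, g b, g (g a)] := by
  have hM : IsUnit (shiftMatrix (algebraMap k L ξ)).det := by simpa [det_shiftMatrix] using hξ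
  refine (eq_inv_mul_mul_iff hM _ _).trans ⟨fun h => ?_, ?_⟩
  · exact ⟨_, _, _, rfl, rfl, rfl, eq_cyclicForm_of_shiftMatrix_mul_map_eq (g.commutes ξ) h⟩
  · rintro ⟨a, b, c, -, -, -, rfl⟩
    exact shiftMatrix_mul_map_cyclicForm (g.commutes ξ)
      (AlgEquiv.apply_apply_apply_of_finrank_eq_three hdeg g) a b c
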